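/- arXiv:1704.00999 — 4 statements merged into one kernel-verified Lean document; each statement's English description precedes it below -/
import Mathlib

section
/- In a safety game equipped with a tba-simulation ⊵, each set Attr_i in the attractor sequence defined by Attr_0 = Bad and Attr_{i+1} = Attr_i ∪ UPre(Attr_i) is upward closed with respect to ⊵. -/
/-- Uncontrollable predecessors: `P`-nodes with some successor in `X`, together with
`S`-nodes all of whose successors are in `X`. -/
def UPre {V : Type*} (VS VP : Set V) (E : V → V → Prop) (X : Set V) : Set V :=
  {v | v ∈ VP ∧ ∃ u, E v u ∧ u ∈ X} ∪ {v | v ∈ VS ∧ ∀ u, E v u → u ∈ X}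

/-- Upward closure w.r.t. a relation `R`, where `R v x` means `v ⊵ x`. -/
def upcl {V : Type*} (R : V → V → Prop) (X : Set V) : Set V := {v | ∃ x ∈ X, R v x}

/-- `R` is a turn-based alternating simulation (a partial order on same-player pairs
satisfying the tba-simulation conditions) for the safety game `(VS, VP, E, Bad)`. -/
def IsTBASim {V : Type*} (VS VP : Set V) (E : V → V → Prop) (Bad : Set V)
    (R : V → V → Prop) : Prop :=
  (∀ v, R v v) ∧ (∀ a b c, R a b → R b c → R a c) ∧ (∀ a b, R a b → R b a → a = b) ∧
  (∀ v1 v2, R v1 v2 → (v1 ∈ VS ∧ v2 ∈ VS) ∨ (v1 ∈ VP ∧ v2 ∈ VP)) ∧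
  (∀ v1 v2, R v1 v2 → v1 ∈ Bad ∨
    ((v1 ∈ VS → ∀ v1', E v1 v1' → ∃ v2', E v2 v2' ∧ R v1' v2') ∧
     (v1 ∈ VP → ∀ v2', E v2 v2' → ∃ v1', E v1 v1' ∧ R v1' v2') ∧
     (v2 ∈ Bad → v1 ∈ Bad)))

/-- each set of the attractor sequence is upward closed for a
tba-simulation. -/
theorem stmt6 {V : Type*} [Fintype V] (VS VP : Set V) (E : V → V → Prop) (Bad : Set V) (R : V → V → Prop)
    (hdisj : Disjoint VS VP) (hBad : Bad ⊆ VP)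
    (hbip : ∀ v v', E v v' → (v ∈ VS ∧ v' ∈ VP) ∨ (v ∈ VP ∧ v' ∈ VS))
    (hsucc : ∀ v, ∃ v', E v v')
    (htba : IsTBASim VS VP E Bad R)
    (Attr : ℕ → Set V)
    (h0 : Attr 0 = Bad)
    (hs : ∀ i, Attr (i + 1) = Attr i ∪ UPre VS VP E (Attr i)) :
    ∀ i, ∀ v v', R v v' → v' ∈ Attr i → v ∈ Attr i := by
  obtain ⟨hrefl, htrans, hanti, hplayer, hsim⟩ := htba
  have hBadAttr : ∀ i, Bad ⊆ Attr i := by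
    intro i
    induction i with
    | zero => rw [h0]
    | succ n ih => rw [hs]; exact ih.trans Set.subset_union_left
  intro i
  induction i with
  | zero =>
    intro v v' hR hv'
    rw [h0] at hv' ⊢
    rcases hsim v v' hR with h | ⟨_, _, h3⟩
    · exact h
    · exact h3 hv'
  | succ n ih =>
    intro v v' hR hv'
    rw [hs] at hv' ⊢
    rcases hv' with hv' | hv'
    · exact Or.inl (ih v v' hR hv')
    rcases hsim v v' hR with hvb | ⟨h1, h2, _⟩
    · exact Or.inl (hBadAttr n hvb)
    rcases hv' with ⟨hv'P, u, hEu, huA⟩ | ⟨hv'S, hall⟩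
    · have hvP : v ∈ VP := by
        rcases hplayer v v' hR with ⟨_, h⟩ | ⟨h, _⟩
        · exact absurd hv'P (hdisj.subset_compl_right h)
        · exact h
      obtain ⟨v1', hE1, hR1⟩ := h2 hvP u hEu
      exact Or.inr (Or.inl ⟨hvP, v1', hE1, ih v1' u hR1 huA⟩)
    · have hvS : v ∈ VS := by
        rcases hplayer v v' hR with ⟨h, _⟩ | ⟨_, h⟩
        · exact h
        · exact absurd hv'S (hdisj.subset_compl_left h)
      refine Or.inr (Or.inr ⟨hvS, fun u hEu => ?_⟩)
      obtain ⟨v2', hE2, hR2⟩ := h1 hvS u hEu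
      exact ih u v2' hR2 (hall v2' hE2)
end

section
/- In a safety game with tba-simulation ⊵, if v is losing (i.e., in the attractor of Bad) and v' ⊵ v, then v' is losing. Equivalently, the set Lose of losing nodes is upward closed for ⊵. -/
/-- the set `Lose` of losing nodes (the least fixed point of
`X ↦ Bad ∪ UPre(X)`) is upward closed for a tba-simulation. -/
theorem stmt10 {V : Type*} [Fintype V] (VS VP : Set V) (E : V → V → Prop) (Bad : Set V) (R : V → V → Prop)
    (hdisj : Disjoint VS VP) (hBad : Bad ⊆ VP)
    (hbip : ∀ v v', E v v' → (v ∈ VS ∧ v' ∈ VP) ∨ (v ∈ VP ∧ v' ∈ VS))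
    (hsucc : ∀ v, ∃ v', E v v')
    (htba : IsTBASim VS VP E Bad R) :
    ∀ v v', R v v' → v' ∈ ⋂₀ {X : Set V | Bad ∪ UPre VS VP E X ⊆ X} →
      v ∈ ⋂₀ {X : Set V | Bad ∪ UPre VS VP E X ⊆ X} := by
  classical
  obtain ⟨hrefl, htrans, hanti, hsame, hcond⟩ := htba
  set L : Set V := ⋂₀ {X : Set V | Bad ∪ UPre VS VP E X ⊆ X} with hL
  -- L is a prefixed point
  have hLpre : Bad ∪ UPre VS VP E L ⊆ L := by
    intro x hx
    intro X hX
    apply hX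
    rcases hx with hx | hx
    · exact Or.inl hx
    · refine Or.inr ?_
      rcases hx with ⟨hP, u, hEu, hu⟩ | ⟨hS, hall⟩
      · exact Or.inl ⟨hP, u, hEu, hu X hX⟩
      · exact Or.inr ⟨hS, fun u hEu => hall u hEu X hX⟩
  -- the key set
  set D : Set V := {v' | ∀ v, R v v' → v ∈ L} with hD
  have hDpre : Bad ∪ UPre VS VP E D ⊆ D := by
    intro v' hv' v hR
    rcases hv' with hv' | hv'
    · -- v' ∈ Bad
      rcases hcond v v' hR with hvB | ⟨_, _, h3⟩
      · exact hLpre (Or.inl hvB)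
      · exact hLpre (Or.inl (h3 hv'))
    · rcases hv' with ⟨hP, u', hEu', hu'⟩ | ⟨hS, hall⟩
      · -- v' ∈ VP with successor in D
        have hvP : v ∈ VP := by
          rcases hsame v v' hR with ⟨_, h⟩ | ⟨h, _⟩
          · exact absurd hP (hdisj.le_bot ⟨h, hP⟩).elim
          · exact h
        rcases hcond v v' hR with hvB | ⟨_, h2, _⟩
        · exact hLpre (Or.inl hvB)
        · obtain ⟨w, hEw, hRw⟩ := h2 hvP u' hEu'
          exact hLpre (Or.inr (Or.inl ⟨hvP, w, hEw, hu' w hRw⟩))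
      · -- v' ∈ VS with all successors in D
        have hvS : v ∈ VS := by
          rcases hsame v v' hR with ⟨h, _⟩ | ⟨_, h⟩
          · exact h
          · exact absurd hS (hdisj.le_bot ⟨hS, h⟩).elim
        rcases hcond v v' hR with hvB | ⟨h1, _, _⟩
        · exact absurd hvS (by intro h; exact (hdisj.le_bot ⟨h, hBad hvB⟩).elim)
        · refine hLpre (Or.inr (Or.inr ⟨hvS, fun w hEw => ?_⟩))
          obtain ⟨u', hEu', hRu'⟩ := h1 hvS w hEw
          exact hall u' hEu' w hRu'
  intro v v' hR hv'
  exact hv' D hDpre v hR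
end

section
/- In a safety game with tba-simulation ⊵, for any upward-closed set V of player-P nodes, PreA(V) is upward closed, where PreA(V) = {v ∈ V_S | Succ(v) ⊆ V}, provided no node of V_S is in Bad. -/
/-- if no `S`-node is `Bad`, then for any upward-closed set `Vset ⊆ V_P`,
`PreA(Vset) = {v ∈ V_S | Succ(v) ⊆ Vset}` is upward closed. -/
theorem stmt14 {V : Type*} [Fintype V] (VS VP : Set V) (E : V → V → Prop) (Bad : Set V) (R : V → V → Prop)
    (hdisj : Disjoint VS VP) (hBad : Bad ⊆ VP)
    (hbip : ∀ v v', E v v' → (v ∈ VS ∧ v' ∈ VP) ∨ (v ∈ VP ∧ v' ∈ VS))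
    (hsucc : ∀ v, ∃ v', E v v')
    (htba : IsTBASim VS VP E Bad R)
    (hnoBad : ∀ v ∈ VS, v ∉ Bad)
    (Vset : Set V) (hVP : Vset ⊆ VP)
    (hup : ∀ v v', R v v' → v' ∈ Vset → v ∈ Vset) :
    ∀ v v', R v v' → v' ∈ {w | w ∈ VS ∧ ∀ u, E w u → u ∈ Vset} →
      v ∈ {w | w ∈ VS ∧ ∀ u, E w u → u ∈ Vset} := by
  intro v v' hR hv'
  obtain ⟨hv'S, hv'succ⟩ := hv'
  obtain ⟨hrefl, htrans, hanti, hsame, hmain⟩ := htba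
  have hvS : v ∈ VS := by
    rcases hsame v v' hR with ⟨h1, _⟩ | ⟨_, h2⟩
    · exact h1
    · exact absurd h2 (fun h => hdisj.ne_of_mem hv'S h rfl)
  refine ⟨hvS, fun u hEu => ?_⟩
  rcases hmain v v' hR with hbad | ⟨hS, _, _⟩
  · exact absurd hbad (hnoBad v hvS)
  · obtain ⟨u', hEu', hRu⟩ := hS hvS u hEu
    exact hup u u' hRu (hv'succ u' hEu')
end

section
/- Define two sequences on a finite safety game with tba-simulation: Attr_0 = Bad, Attr_{i+1} = Attr_i ∪ UPre(Attr_i); and AntiLosing_0 = ⌊Bad⌋ (the minimal antichain of Bad), AntiLosing_{i+1} = ⌊AntiLosing_i ∪ UPre#(AntiLosing_i)⌋ where UPre#(A) = ⌊UPre(↑A)⌋. Then for all i, Attr_i = ↑AntiLosing_i. -/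
/-- `A` is a minimal antichain of `X` w.r.t. `R` (`R x a` meaning `x ⊵ a`). -/
def IsMinAntichain {V : Type*} (R : V → V → Prop) (X A : Set V) : Prop :=
  A ⊆ X ∧ (∀ a ∈ A, ∀ b ∈ A, a ≠ b → ¬ R a b ∧ ¬ R b a) ∧ (∀ x ∈ X, ∃ a ∈ A, R x a)

/-- the antichain sequence represents the attractor sequence:
`Attr_i = ↑AntiLosing_i` for all `i`. -/
theorem stmt15 {V : Type*} [Fintype V] (VS VP : Set V) (E : V → V → Prop) (Bad : Set V) (R : V → V → Prop)
    (hdisj : Disjoint VS VP) (hBad : Bad ⊆ VP)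
    (hbip : ∀ v v', E v v' → (v ∈ VS ∧ v' ∈ VP) ∨ (v ∈ VP ∧ v' ∈ VS))
    (hsucc : ∀ v, ∃ v', E v v')
    (htba : IsTBASim VS VP E Bad R)
    (minAC : Set V → Set V) (hminAC : ∀ X, IsMinAntichain R X (minAC X))
    (Attr AL : ℕ → Set V)
    (hA0 : Attr 0 = Bad)
    (hAs : ∀ i, Attr (i + 1) = Attr i ∪ UPre VS VP E (Attr i))
    (hL0 : AL 0 = minAC Bad)
    (hLs : ∀ i, AL (i + 1) = minAC (AL i ∪ minAC (UPre VS VP E (upcl R (AL i))))) :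
    ∀ i, Attr i = upcl R (AL i) := by

  obtain ⟨hrefl, htrans, _hanti, hplayer, hsim⟩ := htba
  have hupmin : ∀ X, upcl R (minAC X) = upcl R X := by
    intro X
    obtain ⟨hsub, _, hdom⟩ := hminAC X
    ext v
    constructor
    · rintro ⟨a, ha, hva⟩; exact ⟨a, hsub ha, hva⟩
    · rintro ⟨x, hx, hvx⟩
      obtain ⟨a, ha, hxa⟩ := hdom x hx
      exact ⟨a, ha, htrans _ _ _ hvx hxa⟩
  have hupunion : ∀ X Y : Set V, upcl R (X ∪ Y) = upcl R X ∪ upcl R Y := by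
    intro X Y; ext v; constructor
    · rintro ⟨x, hx | hx, h⟩
      · exact Or.inl ⟨x, hx, h⟩
      · exact Or.inr ⟨x, hx, h⟩
    · rintro (⟨x, hx, h⟩ | ⟨x, hx, h⟩)
      exacts [⟨x, Or.inl hx, h⟩, ⟨x, Or.inr hx, h⟩]
  have hBadUp : ∀ v x, R v x → x ∈ Bad → v ∈ Bad := by
    intro v x hvx hx
    rcases hsim v x hvx with h | ⟨_, _, h⟩
    · exact h
    · exact h hx
  have hkey : ∀ X : Set V, (∀ v x, R v x → x ∈ X → v ∈ X) → Bad ⊆ X →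
      ∀ v x, R v x → x ∈ X ∪ UPre VS VP E X → v ∈ X ∪ UPre VS VP E X := by
    intro X hXup hBX v x hvx hx
    rcases hx with hx | hx
    · exact Or.inl (hXup v x hvx hx)
    rcases hsim v x hvx with hvBad | ⟨hS, hP, _⟩
    · exact Or.inl (hBX hvBad)
    rcases hplayer v x hvx with ⟨hvS, hxS⟩ | ⟨hvP, hxP⟩
    · rcases hx with ⟨hxP', _⟩ | ⟨_, hall⟩
      · exact absurd hxP' (Set.disjoint_left.mp hdisj hxS)
      · refine Or.inr (Or.inr ⟨hvS, fun u hu => ?_⟩)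
        obtain ⟨u', hu', hru⟩ := hS hvS u hu
        exact hXup u u' hru (hall u' hu')
    · rcases hx with ⟨_, u, hu, huX⟩ | ⟨hxS', _⟩
      · obtain ⟨u', hu', hru⟩ := hP hvP u hu
        exact Or.inr (Or.inl ⟨hvP, u', hu', hXup u' u hru huX⟩)
      · exact absurd hxS' (Set.disjoint_right.mp hdisj hxP)
  have main : ∀ i, Attr i = upcl R (AL i) ∧ (∀ v x, R v x → x ∈ Attr i → v ∈ Attr i)
      ∧ Bad ⊆ Attr i := by
    intro i
    induction i with
    | zero =>
      have h0 : Attr 0 = upcl R (AL 0) := by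
        rw [hA0, hL0, hupmin]
        ext v
        constructor
        · intro hv; exact ⟨v, hv, hrefl v⟩
        · rintro ⟨x, hx, hvx⟩; exact hBadUp v x hvx hx
      refine ⟨h0, ?_, ?_⟩
      · rw [hA0]; exact hBadUp
      · rw [hA0]
    | succ i ih =>
      obtain ⟨hEq, hUp, hB⟩ := ih
      have hUpcl : upcl R (Attr i) = Attr i := by
        ext v
        constructor
        · rintro ⟨x, hx, h⟩; exact hUp v x h hx
        · intro hv; exact ⟨v, hv, hrefl v⟩
      have hUp1 : ∀ v x, R v x → x ∈ Attr (i+1) → v ∈ Attr (i+1) := by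
        rw [hAs]; exact hkey (Attr i) hUp hB
      have hB1 : Bad ⊆ Attr (i+1) := by
        rw [hAs]; exact fun v hv => Or.inl (hB hv)
      refine ⟨?_, hUp1, hB1⟩
      rw [hLs, hupmin, hupunion, hupmin, ← hEq, hAs]
      ext v
      constructor
      · rintro (hv | hv)
        · exact Or.inl hv
        · exact Or.inr ⟨v, hv, hrefl v⟩
      · rintro (hv | hv)
        · exact Or.inl hv
        · obtain ⟨x, hx, hvx⟩ := hv
          exact hkey (Attr i) hUp hB v x hvx (Or.inr hx)
  exact fun i => (main i).1
end
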